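/- arXiv:1001.2121 — 2 statements merged into one kernel-verified Lean document; each statement's English description precedes it below -/
import Mathlib

section
/- Let j be a natural number and f_j : ℝ → ℝ continuously differentiable. For t ∈ (0,1) and 0 ≤ ℓ ≤ j define g_{jℓ}(t) = binom(j,ℓ)·∫_0^t f_j(τ)·(ln((1−τ²)/(1−t²)))^{j−ℓ}·(1/(1−τ²)) dτ. Then: (1) for every t ∈ (0,1) and x ∈ ℝ, ∫_0^t f_j(τ)·(x + ln((1−τ²)/(1−t²)))^j·(1/(1−τ²)) dτ = Σ_{ℓ=0}^j g_{jℓ}(t)·x^ℓ; (2) for each ℓ ∈ {0,...,j}, g_{jℓ}(t) = O((ln(1/(1−t)))^{j+1−ℓ}) as t → 1⁻; (3) the leading coefficient satisfies g_{jj}(t)/ln(1/(1−t)) → f_j(1)/2 as t → 1⁻; and (4) the constant coefficient satisfies g_{j0}(t)/(ln(1/(1−t)))^{j+1} → f_j(1)/(2(j+1)) as t → 1⁻. -/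
open Filter Asymptotics intervalIntegral

lemma tendsto_M : Tendsto (fun t : ℝ => -Real.log (1 - t)) (nhdsWithin 1 (Set.Iio 1)) atTop := by
  have h1 : Tendsto (fun t : ℝ => 1 - t) (nhdsWithin 1 (Set.Iio 1)) (nhdsWithin 0 (Set.Ioi 0)) := by
    apply tendsto_nhdsWithin_of_tendsto_nhds_of_eventually_within
    · have h0 : Tendsto (fun t : ℝ => 1 - t) (nhds 1) (nhds (0:ℝ)) := by
        have hc : Continuous (fun t : ℝ => 1 - t) := continuous_const.sub continuous_id
        have := hc.tendsto (1:ℝ)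
        norm_num at this
        exact this
      exact h0.mono_left nhdsWithin_le_nhds
    · filter_upwards [self_mem_nhdsWithin] with t ht
      simpa using ht
  have h2 := Real.tendsto_log_nhdsGT_zero.comp h1
  exact tendsto_neg_atBot_atTop.comp h2

lemma intInt (k : ℕ) {h : ℝ → ℝ} {a b c : ℝ} (hab : a ≤ b) (hb : b < 1)
    (hh : ContinuousOn h (Set.Icc a b)) :
    IntervalIntegrable (fun τ => h τ * (Real.log (1 - τ) - c) ^ k * (1 / (1 - τ))) MeasureTheory.volume a b := by
  apply ContinuousOn.intervalIntegrable
  rw [Set.uIcc_of_le hab]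
  have hne : ∀ τ ∈ Set.Icc a b, (1 : ℝ) - τ ≠ 0 := by
    intro τ hτ
    have : τ < 1 := lt_of_le_of_lt hτ.2 hb
    nlinarith
  have hlog : ContinuousOn (fun τ : ℝ => Real.log (1 - τ)) (Set.Icc a b) :=
    ContinuousOn.log (continuous_const.sub continuous_id).continuousOn hne
  exact ((hh.mul ((hlog.sub continuousOn_const).pow k)).mul
    (continuousOn_const.div (continuous_const.sub continuous_id).continuousOn hne))

lemma lemA (k : ℕ) {a t : ℝ} (hat : a ≤ t) (ht1 : t < 1) :
    ∫ τ in a..t, (Real.log (1 - τ) - Real.log (1 - t)) ^ k * (1 / (1 - τ))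
      = (Real.log (1 - a) - Real.log (1 - t)) ^ (k + 1) / (k + 1) := by
  have hderiv : ∀ x ∈ Set.uIcc a t, HasDerivAt
      (fun τ : ℝ => -(Real.log (1 - τ) - Real.log (1 - t)) ^ (k+1) / ((k:ℝ)+1))
      ((Real.log (1 - x) - Real.log (1 - t)) ^ k * (1 / (1 - x))) x := by
    intro x hx
    rw [Set.uIcc_of_le hat] at hx
    have hx1 : (1:ℝ) - x ≠ 0 := by
      have : x < 1 := lt_of_le_of_lt hx.2 ht1
      nlinarith
    have hlog : HasDerivAt (fun τ : ℝ => Real.log (1 - τ)) ((-1) / (1 - x)) x :=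
      HasDerivAt.log (by simpa using ((hasDerivAt_id x).const_sub 1)) hx1
    have hD : HasDerivAt (fun τ : ℝ => Real.log (1 - τ) - Real.log (1 - t)) ((-1) / (1 - x)) x :=
      hlog.sub_const _
    have hP := ((hD.pow (k+1)).neg.div_const ((k:ℝ)+1))
    refine hP.congr_deriv ?_
    have hk : ((k:ℝ)+1) ≠ 0 := by positivity
    field_simp
    rw [Nat.add_sub_cancel]
    push_cast
    ring
  have hint : IntervalIntegrable
      (fun τ : ℝ => (Real.log (1 - τ) - Real.log (1 - t)) ^ k * (1 / (1 - τ)))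
      MeasureTheory.volume a t := by
    have := intInt k (h := fun _ => (1:ℝ)) (c := Real.log (1-t)) hat ht1 continuousOn_const
    simpa using this
  have key := intervalIntegral.integral_eq_sub_of_hasDerivAt hderiv hint
  rw [key]
  simp
  ring

lemma lemBound (k : ℕ) {h : ℝ → ℝ} {a t C : ℝ} (hat : a ≤ t) (ht1 : t < 1)
    (hh : ContinuousOn h (Set.Icc a t))
    (hC : ∀ τ ∈ Set.Icc a t, |h τ| ≤ C) :
    |∫ τ in a..t, h τ * (Real.log (1 - τ) - Real.log (1 - t)) ^ k * (1 / (1 - τ))|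
      ≤ C * ((Real.log (1 - a) - Real.log (1 - t)) ^ (k + 1) / (k + 1)) := by
  have hCnn : 0 ≤ C := le_trans (abs_nonneg _) (hC a ⟨le_refl a, hat⟩)
  have hptwise : ∀ τ ∈ Set.uIoc a t,
      ‖h τ * (Real.log (1 - τ) - Real.log (1 - t)) ^ k * (1 / (1 - τ))‖
        ≤ C * (Real.log (1 - τ) - Real.log (1 - t)) ^ k * (1 / (1 - τ)) := by
    intro τ hτ
    rw [Set.uIoc_of_le hat] at hτ
    have hτt : τ ≤ t := hτ.2
    have hτ1 : τ < 1 := lt_of_le_of_lt hτt ht1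
    have h1τ : (0:ℝ) < 1 - τ := by linarith
    have h1t : (0:ℝ) < 1 - t := by linarith
    have hDnn : 0 ≤ Real.log (1 - τ) - Real.log (1 - t) := by
      have := Real.log_le_log h1t (by linarith : 1 - t ≤ 1 - τ)
      linarith
    rw [Real.norm_eq_abs, abs_mul, abs_mul]
    gcongr
    · exact hC τ ⟨le_of_lt hτ.1, hτt⟩
    · rw [abs_pow, abs_of_nonneg hDnn]
    · rw [abs_of_nonneg (by positivity : (0:ℝ) ≤ 1/(1-τ))]
  have hint : IntervalIntegrable
      (fun τ : ℝ => C * (Real.log (1 - τ) - Real.log (1 - t)) ^ k * (1 / (1 - τ)))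
      MeasureTheory.volume a t := intInt k hat ht1 continuousOn_const
  have := intervalIntegral.norm_integral_le_abs_of_norm_le
      ((MeasureTheory.ae_restrict_iff' measurableSet_uIoc).mpr
        (MeasureTheory.ae_of_all _ hptwise)) hint
  rw [Real.norm_eq_abs] at this
  refine this.trans ?_
  have heq : ∫ τ in a..t, C * (Real.log (1 - τ) - Real.log (1 - t)) ^ k * (1 / (1 - τ))
      = C * ((Real.log (1 - a) - Real.log (1 - t)) ^ (k + 1) / (k + 1)) := by
    have h2 : ∀ τ : ℝ, C * (Real.log (1 - τ) - Real.log (1 - t)) ^ k * (1 / (1 - τ)) =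
        C * ((Real.log (1 - τ) - Real.log (1 - t)) ^ k * (1 / (1 - τ))) := fun τ => by ring
    simp only [h2]
    rw [intervalIntegral.integral_const_mul, lemA k hat ht1]
  rw [heq, abs_of_nonneg]
  have hDnn : 0 ≤ Real.log (1 - a) - Real.log (1 - t) := by
    have h1t : (0:ℝ) < 1 - t := by linarith
    have := Real.log_le_log h1t (by linarith : 1 - t ≤ 1 - a)
    linarith
  positivity

lemma lemB (k : ℕ) {h : ℝ → ℝ} (hh : ContinuousOn h (Set.Icc 0 1)) (h1 : h 1 = 0) :
    Tendsto (fun t : ℝ =>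
      (∫ τ in (0:ℝ)..t, h τ * (Real.log (1 - τ) - Real.log (1 - t)) ^ k * (1 / (1 - τ)))
        / (-Real.log (1 - t)) ^ (k + 1)) (nhdsWithin 1 (Set.Iio 1)) (nhds 0) := by
  rw [NormedAddCommGroup.tendsto_nhds_zero]
  intro ε hε
  obtain ⟨C, hC⟩ : ∃ C, ∀ τ ∈ Set.Icc (0:ℝ) 1, |h τ| ≤ C := by
    obtain ⟨C, hC⟩ := isCompact_Icc.exists_bound_of_continuousOn hh
    exact ⟨C, fun τ hτ => hC τ hτ⟩
  have hCnn : 0 ≤ C := le_trans (abs_nonneg _) (hC 0 (by norm_num))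
  have hcont : ContinuousWithinAt h (Set.Icc 0 1) 1 := hh 1 (by norm_num)
  rw [ContinuousWithinAt, h1] at hcont
  obtain ⟨δ, hδ, hball⟩ := Metric.tendsto_nhdsWithin_nhds.mp hcont (ε/2) (by positivity)
  set a : ℝ := max (1 - δ/2) (1/2) with ha_def
  have ha0 : (0:ℝ) ≤ a := le_trans (by norm_num) (le_max_right _ _)
  have ha1 : a < 1 := by
    apply max_lt (by linarith) (by norm_num)
  have hsmall : ∀ τ ∈ Set.Icc a 1, |h τ| ≤ ε/2 := by
    intro τ hτ
    have hτ01 : τ ∈ Set.Icc (0:ℝ) 1 := ⟨le_trans ha0 hτ.1, hτ.2⟩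
    have hd : dist τ 1 < δ := by
      rw [Real.dist_eq, abs_of_nonpos (by linarith [hτ.2])]
      have : 1 - δ/2 ≤ τ := le_trans (le_max_left _ _) hτ.1
      linarith
    have := hball hτ01 hd
    rw [dist_zero_right, Real.norm_eq_abs] at this
    exact le_of_lt this
  set Ca : ℝ := C / (1 - a) with hCa_def
  have hCann : 0 ≤ Ca := div_nonneg hCnn (by linarith)
  filter_upwards [Ioo_mem_nhdsLT_of_mem (show (1:ℝ) ∈ Set.Ioc a 1 from ⟨ha1, le_refl 1⟩),
    tendsto_M.eventually_gt_atTop (2*(Ca+1)/ε)] with t ht hMbig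
  have hat : a ≤ t := le_of_lt ht.1
  have ht1 : t < 1 := ht.2
  have ht0 : (0:ℝ) ≤ t := le_trans ha0 hat
  set M : ℝ := -Real.log (1 - t) with hM_def
  have hMpos : 0 < M := lt_trans (by positivity) hMbig
  have h1t : (0:ℝ) < 1 - t := by linarith
  -- split the integral
  have hint1 : IntervalIntegrable
      (fun τ : ℝ => h τ * (Real.log (1 - τ) - Real.log (1 - t)) ^ k * (1 / (1 - τ)))
      MeasureTheory.volume 0 a :=
    intInt k ha0 (lt_of_le_of_lt hat ht1)
      (hh.mono (Set.Icc_subset_Icc (le_refl 0) (le_of_lt ha1)))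
  have hint2 : IntervalIntegrable
      (fun τ : ℝ => h τ * (Real.log (1 - τ) - Real.log (1 - t)) ^ k * (1 / (1 - τ)))
      MeasureTheory.volume a t :=
    intInt k hat ht1 (hh.mono (Set.Icc_subset_Icc ha0 (le_of_lt ht1)))
  have hsplit : (∫ τ in (0:ℝ)..t, h τ * (Real.log (1 - τ) - Real.log (1 - t)) ^ k * (1 / (1 - τ)))
      = (∫ τ in (0:ℝ)..a, h τ * (Real.log (1 - τ) - Real.log (1 - t)) ^ k * (1 / (1 - τ)))
        + ∫ τ in a..t, h τ * (Real.log (1 - τ) - Real.log (1 - t)) ^ k * (1 / (1 - τ)) :=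
    (intervalIntegral.integral_add_adjacent_intervals hint1 hint2).symm
  -- bound the first piece
  have hbound1 : |∫ τ in (0:ℝ)..a, h τ * (Real.log (1 - τ) - Real.log (1 - t)) ^ k * (1 / (1 - τ))|
      ≤ Ca * M ^ k := by
    have hpt : ∀ x ∈ Set.uIoc (0:ℝ) a,
        ‖h x * (Real.log (1 - x) - Real.log (1 - t)) ^ k * (1 / (1 - x))‖
          ≤ C * M ^ k * (1 / (1 - a)) := by
      intro x hx
      rw [Set.uIoc_of_le ha0] at hx
      have hx0 : 0 < x := hx.1
      have hxa : x ≤ a := hx.2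
      have hx1 : x < 1 := lt_of_le_of_lt hxa ha1
      have h1x : (0:ℝ) < 1 - x := by linarith
      have hDnn : 0 ≤ Real.log (1 - x) - Real.log (1 - t) := by
        have := Real.log_le_log h1t (by linarith : 1 - t ≤ 1 - x)
        linarith
      have hDle : Real.log (1 - x) - Real.log (1 - t) ≤ M := by
        have : Real.log (1 - x) ≤ 0 := Real.log_nonpos (by linarith) (by linarith)
        rw [hM_def]; linarith
      rw [Real.norm_eq_abs, abs_mul, abs_mul]
      gcongr
      · exact hC x ⟨le_of_lt hx0, le_trans hxa (le_of_lt ha1)⟩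
      · rw [abs_pow, abs_of_nonneg hDnn]
        exact pow_le_pow_left₀ hDnn hDle k
      · rw [abs_of_nonneg (by positivity : (0:ℝ) ≤ 1/(1-x))]
        apply div_le_div_of_nonneg_left (by norm_num) (by linarith) (by linarith)
    have := intervalIntegral.norm_integral_le_of_norm_le_const hpt
    rw [Real.norm_eq_abs] at this
    refine this.trans ?_
    have : |a - 0| = a := by rw [sub_zero, abs_of_nonneg ha0]
    rw [this, hCa_def]
    have hMk : (0:ℝ) ≤ M ^ k := by positivity
    have h1a : (0:ℝ) < 1 - a := by linarith
    have h2 : C * M ^ k * (1 / (1 - a)) * a ≤ C * M ^ k * (1 / (1 - a)) := by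
      nlinarith [mul_nonneg (mul_nonneg hCnn hMk) (le_of_lt (by positivity : (0:ℝ) < 1/(1-a)))]
    have h3 : C * M ^ k * (1 / (1 - a)) = C / (1 - a) * M ^ k := by ring
    linarith
  -- bound the second piece
  have hbound2 : |∫ τ in a..t, h τ * (Real.log (1 - τ) - Real.log (1 - t)) ^ k * (1 / (1 - τ))|
      ≤ (ε/2) * M ^ (k+1) := by
    have hb := lemBound k hat ht1 (hh.mono (Set.Icc_subset_Icc ha0 (le_of_lt ht1)))
      (fun τ hτ => hsmall τ ⟨hτ.1, le_trans hτ.2 (le_of_lt ht1)⟩)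
    refine hb.trans ?_
    have hDnn : 0 ≤ Real.log (1 - a) - Real.log (1 - t) := by
      have := Real.log_le_log h1t (by linarith : 1 - t ≤ 1 - a)
      linarith
    have hDle : Real.log (1 - a) - Real.log (1 - t) ≤ M := by
      have : Real.log (1 - a) ≤ 0 := Real.log_nonpos (by linarith) (by linarith)
      rw [hM_def]; linarith
    have hpow : (Real.log (1 - a) - Real.log (1 - t)) ^ (k+1) ≤ M ^ (k+1) :=
      pow_le_pow_left₀ hDnn hDle (k+1)
    have hk1 : (1:ℝ) ≤ (k:ℝ) + 1 := by have := Nat.cast_nonneg (α:=ℝ) k; linarith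
    have hdiv : (Real.log (1 - a) - Real.log (1 - t)) ^ (k+1) / ((k:ℝ)+1)
        ≤ M ^ (k+1) :=
      le_trans (div_le_self (pow_nonneg hDnn _) hk1) hpow
    exact mul_le_mul_of_nonneg_left hdiv (by positivity)
  -- conclude
  rw [Real.norm_eq_abs, hsplit, abs_div]
  have hMk1 : (0:ℝ) < M ^ (k+1) := by positivity
  rw [abs_of_pos hMk1, div_lt_iff₀ hMk1]
  have htri : |(∫ τ in (0:ℝ)..a, h τ * (Real.log (1 - τ) - Real.log (1 - t)) ^ k * (1 / (1 - τ)))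
        + ∫ τ in a..t, h τ * (Real.log (1 - τ) - Real.log (1 - t)) ^ k * (1 / (1 - τ))|
      ≤ Ca * M ^ k + (ε/2) * M ^ (k+1) :=
    (abs_add_le _ _).trans (add_le_add hbound1 hbound2)
  refine lt_of_le_of_lt htri ?_
  have hMsucc : M ^ (k+1) = M * M ^ k := by rw [pow_succ]; ring
  have hMk : (0:ℝ) < M ^ k := by positivity
  have hkey : Ca * M ^ k < (ε/2) * M ^ (k+1) := by
    rw [hMsucc]
    have : Ca < (ε/2) * M := by
      rw [div_lt_iff₀ hε] at hMbig
      nlinarith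
    nlinarith
  nlinarith

lemma lemC (k : ℕ) {h : ℝ → ℝ} (hh : ContinuousOn h (Set.Icc 0 1)) :
    Tendsto (fun t : ℝ =>
      (∫ τ in (0:ℝ)..t, h τ * (Real.log (1 - τ) - Real.log (1 - t)) ^ k * (1 / (1 - τ)))
        / (-Real.log (1 - t)) ^ (k + 1)) (nhdsWithin 1 (Set.Iio 1))
      (nhds (h 1 / (k + 1))) := by
  have hh' : ContinuousOn (fun τ => h τ - h 1) (Set.Icc (0:ℝ) 1) := hh.sub continuousOn_const
  have hB := lemB k hh' (by simp)
  have hmain := hB.add_const (h 1 / ((k:ℝ)+1))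
  rw [zero_add] at hmain
  apply Tendsto.congr' _ hmain
  filter_upwards [Ioo_mem_nhdsLT_of_mem (show (1:ℝ) ∈ Set.Ioc 0 1 by norm_num)] with t ht
  have ht0 : (0:ℝ) ≤ t := le_of_lt ht.1
  have ht1 : t < 1 := ht.2
  have h1t : (0:ℝ) < 1 - t := by linarith
  have hMpos : 0 < -Real.log (1 - t) := by
    have : Real.log (1 - t) < 0 := Real.log_neg h1t (by linarith [ht.1])
    linarith
  have hint1 : IntervalIntegrable
      (fun τ : ℝ => (h τ - h 1) * (Real.log (1 - τ) - Real.log (1 - t)) ^ k * (1 / (1 - τ)))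
      MeasureTheory.volume 0 t :=
    intInt k ht0 ht1 (hh'.mono (Set.Icc_subset_Icc (le_refl 0) (le_of_lt ht1)))
  have hint2 : IntervalIntegrable
      (fun τ : ℝ => h 1 * (Real.log (1 - τ) - Real.log (1 - t)) ^ k * (1 / (1 - τ)))
      MeasureTheory.volume 0 t :=
    intInt k ht0 ht1 continuousOn_const
  have hsplit : (∫ τ in (0:ℝ)..t, h τ * (Real.log (1 - τ) - Real.log (1 - t)) ^ k * (1 / (1 - τ)))
      = (∫ τ in (0:ℝ)..t, (h τ - h 1) * (Real.log (1 - τ) - Real.log (1 - t)) ^ k * (1 / (1 - τ)))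
        + ∫ τ in (0:ℝ)..t, h 1 * (Real.log (1 - τ) - Real.log (1 - t)) ^ k * (1 / (1 - τ)) := by
    rw [← intervalIntegral.integral_add hint1 hint2]
    apply intervalIntegral.integral_congr
    intro τ _
    ring
  have hconst : (∫ τ in (0:ℝ)..t, h 1 * (Real.log (1 - τ) - Real.log (1 - t)) ^ k * (1 / (1 - τ)))
      = h 1 * ((-Real.log (1 - t)) ^ (k+1) / ((k:ℝ)+1)) := by
    have h2 : ∀ τ : ℝ, h 1 * (Real.log (1 - τ) - Real.log (1 - t)) ^ k * (1 / (1 - τ)) =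
        h 1 * ((Real.log (1 - τ) - Real.log (1 - t)) ^ k * (1 / (1 - τ))) := fun τ => by ring
    simp only [h2]
    rw [intervalIntegral.integral_const_mul, lemA k ht0 ht1]
    norm_num
  rw [hsplit, hconst, add_div]
  congr 1
  have hMk1 : (0:ℝ) < (-Real.log (1 - t)) ^ (k+1) := by positivity
  field_simp

lemma intInt2 (m : ℕ) {h : ℝ → ℝ} {t s : ℝ} (ht0 : 0 ≤ t) (ht1 : t < 1)
    (hh : ContinuousOn h (Set.Icc 0 t)) (hs : s ≠ 0) :
    IntervalIntegrable (fun τ => h τ * Real.log ((1 - τ^2)/s) ^ m * (1/(1 - τ^2)))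
      MeasureTheory.volume 0 t := by
  apply ContinuousOn.intervalIntegrable
  rw [Set.uIcc_of_le ht0]
  have hne : ∀ τ ∈ Set.Icc (0:ℝ) t, (1:ℝ) - τ^2 ≠ 0 := by
    intro τ hτ
    have h1 : 0 ≤ τ := hτ.1
    have h2 : τ < 1 := lt_of_le_of_lt hτ.2 ht1
    nlinarith
  have hcontq : ContinuousOn (fun τ : ℝ => 1 - τ^2) (Set.Icc 0 t) :=
    (continuous_const.sub (continuous_pow 2)).continuousOn
  have hlog : ContinuousOn (fun τ : ℝ => Real.log ((1 - τ^2)/s)) (Set.Icc 0 t) :=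
    ContinuousOn.log (hcontq.div_const s) (fun τ hτ => div_ne_zero (hne τ hτ) hs)
  exact (hh.mul (hlog.pow m)).mul (continuousOn_const.div hcontq hne)

set_option maxHeartbeats 1000000 in
/-- Sharp estimates for `L₀^{-1}` of a monomial right-hand side `f_j(t)x^j`:
with `g_{jℓ}(t) = C(j,ℓ) ∫_0^t f_j(τ) (ln((1-τ²)/(1-t²)))^{j-ℓ}/(1-τ²) dτ`, the integral
along characteristics expands as `Σ_ℓ g_{jℓ}(t) x^ℓ`; each `g_{jℓ}` is
`O((ln(1/(1-t)))^{j+1-ℓ})` as `t → 1⁻`, `g_{jj}(t)/ln(1/(1-t)) → f_j(1)/2`, and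
`g_{j0}(t)/(ln(1/(1-t)))^{j+1} → f_j(1)/(2(j+1))`. -/
theorem stmt_17 (j : ℕ) (fj : ℝ → ℝ) (hfj : ContDiff ℝ 1 fj)
    (g : ℕ → ℝ → ℝ)
    (hg : ∀ l : ℕ, ∀ t : ℝ, g l t = (j.choose l : ℝ) *
      ∫ τ in (0 : ℝ)..t,
        fj τ * Real.log ((1 - τ ^ 2) / (1 - t ^ 2)) ^ (j - l) * (1 / (1 - τ ^ 2))) :
    (∀ t ∈ Set.Ioo (0 : ℝ) 1, ∀ x : ℝ,
      (∫ τ in (0 : ℝ)..t,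
          fj τ * (x + Real.log ((1 - τ ^ 2) / (1 - t ^ 2))) ^ j * (1 / (1 - τ ^ 2)))
        = ∑ l ∈ Finset.range (j + 1), g l t * x ^ l) ∧
    (∀ l : ℕ, l ≤ j →
      (fun t : ℝ => g l t) =O[nhdsWithin 1 (Set.Iio 1)]
        fun t : ℝ => Real.log (1 / (1 - t)) ^ (j + 1 - l)) ∧
    Tendsto (fun t : ℝ => g j t / Real.log (1 / (1 - t)))
      (nhdsWithin 1 (Set.Iio 1)) (nhds (fj 1 / 2)) ∧
    Tendsto (fun t : ℝ => g 0 t / Real.log (1 / (1 - t)) ^ (j + 1))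
      (nhdsWithin 1 (Set.Iio 1)) (nhds (fj 1 / (2 * ((j : ℝ) + 1)))) := by
  have hfc : Continuous fj := hfj.continuous
  obtain ⟨Cf0, hCf0⟩ := isCompact_Icc.exists_bound_of_continuousOn
    (hfc.continuousOn : ContinuousOn fj (Set.Icc (0:ℝ) 1))
  set Cf : ℝ := max Cf0 0 with hCf_def
  have hCfnn : 0 ≤ Cf := le_max_right _ _
  have hCf : ∀ τ ∈ Set.Icc (0:ℝ) 1, |fj τ| ≤ Cf := fun τ hτ =>
    le_trans (hCf0 τ hτ) (le_max_left _ _)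
  refine ⟨?_, ?_, ?_, ?_⟩
  · -- Part 1 : binomial expansion
    rintro t ⟨ht0, ht1⟩ x
    have hs : (1:ℝ) - t^2 ≠ 0 := by nlinarith
    have step1 : (∫ τ in (0 : ℝ)..t,
          fj τ * (x + Real.log ((1 - τ ^ 2) / (1 - t ^ 2))) ^ j * (1 / (1 - τ ^ 2)))
        = ∫ τ in (0 : ℝ)..t, ∑ l ∈ Finset.range (j + 1),
            ((j.choose l : ℝ) * x ^ l) *
              (fj τ * Real.log ((1 - τ ^ 2) / (1 - t ^ 2)) ^ (j - l) * (1 / (1 - τ ^ 2))) := by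
      apply intervalIntegral.integral_congr
      intro τ _
      dsimp only
      rw [add_pow, Finset.mul_sum, Finset.sum_mul]
      apply Finset.sum_congr rfl
      intro l _
      ring
    rw [step1, intervalIntegral.integral_finset_sum]
    · apply Finset.sum_congr rfl
      intro l _
      rw [intervalIntegral.integral_const_mul, hg l t]
      ring
    · intro l _
      exact (intInt2 (j - l) (le_of_lt ht0) ht1 hfc.continuousOn hs).const_mul _
  · -- Part 2 : big-O bounds
    intro l hl
    rw [Asymptotics.isBigO_iff]
    refine ⟨(j.choose l : ℝ) * Cf, ?_⟩
    filter_upwards [Ioo_mem_nhdsLT_of_mem (show (1:ℝ) ∈ Set.Ioc 0 1 by norm_num)] with t ht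
    obtain ⟨ht0, ht1⟩ := ht
    have h1t : (0:ℝ) < 1 - t := by linarith
    have hs : (0:ℝ) < 1 - t^2 := by nlinarith
    set M : ℝ := -Real.log (1 - t) with hM_def
    have hMpos : 0 < M := by
      have : Real.log (1 - t) < 0 := Real.log_neg h1t (by linarith)
      rw [hM_def]; linarith
    have hMrw : Real.log (1 / (1 - t)) = M := by
      rw [one_div, Real.log_inv, hM_def]
    rw [hg l t, hMrw]
    -- pointwise bound
    have hpt : ∀ τ ∈ Set.uIoc (0:ℝ) t,
        ‖fj τ * Real.log ((1 - τ ^ 2) / (1 - t ^ 2)) ^ (j - l) * (1 / (1 - τ ^ 2))‖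
          ≤ Cf * M ^ (j - l) * (1 / (1 - τ)) := by
      intro τ hτ
      rw [Set.uIoc_of_le (le_of_lt ht0)] at hτ
      have hτ0 : 0 < τ := hτ.1
      have hτt : τ ≤ t := hτ.2
      have hτ1 : τ < 1 := lt_of_le_of_lt hτt ht1
      have h1τ : (0:ℝ) < 1 - τ := by linarith
      have hsτ : (0:ℝ) < 1 - τ^2 := by nlinarith
      have hratio1 : (1:ℝ) ≤ (1 - τ^2)/(1 - t^2) := by
        rw [le_div_iff₀ hs]
        nlinarith
      have hLnn : 0 ≤ Real.log ((1 - τ^2)/(1 - t^2)) := Real.log_nonneg hratio1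
      have hLle : Real.log ((1 - τ^2)/(1 - t^2)) ≤ M := by
        have hle : (1 - τ^2)/(1 - t^2) ≤ (1 - t)⁻¹ := by
          rw [div_le_iff₀ hs, inv_mul_eq_div, le_div_iff₀ h1t]
          nlinarith
        have := Real.log_le_log (by positivity) hle
        rw [Real.log_inv] at this
        rw [hM_def]; linarith
      rw [Real.norm_eq_abs, abs_mul, abs_mul]
      gcongr
      · exact hCf τ ⟨le_of_lt hτ0, le_of_lt hτ1⟩
      · rw [abs_pow, abs_of_nonneg hLnn]
        exact pow_le_pow_left₀ hLnn hLle _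
      · rw [abs_of_nonneg (le_of_lt (by positivity : (0:ℝ) < 1/(1-τ^2)))]
        rw [div_le_div_iff₀ hsτ h1τ]
        nlinarith
    have hintb : IntervalIntegrable (fun τ : ℝ => Cf * M ^ (j - l) * (1 / (1 - τ)))
        MeasureTheory.volume 0 t := by
      have := intInt 0 (c := Real.log (1 - t)) (h := fun _ => Cf * M ^ (j - l))
        (le_of_lt ht0) ht1 continuousOn_const
      simpa using this
    have hbd := intervalIntegral.norm_integral_le_abs_of_norm_le
      ((MeasureTheory.ae_restrict_iff' measurableSet_uIoc).mpr
        (MeasureTheory.ae_of_all _ hpt)) hintb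
    have hInt1 : (∫ τ in (0:ℝ)..t, Cf * M ^ (j - l) * (1 / (1 - τ)))
        = Cf * M ^ (j - l) * M := by
      have h2 : ∀ τ : ℝ, Cf * M ^ (j - l) * (1 / (1 - τ)) =
          Cf * M ^ (j - l) * ((Real.log (1 - τ) - Real.log (1 - t)) ^ 0 * (1 / (1 - τ))) := by
        intro τ; simp
      simp only [h2]
      rw [intervalIntegral.integral_const_mul, lemA 0 (le_of_lt ht0) ht1]
      norm_num
      rw [hM_def]; ring
    rw [hInt1] at hbd
    have habs : |Cf * M ^ (j - l) * M| = Cf * M ^ (j - l) * M := by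
      apply abs_of_nonneg; positivity
    rw [habs] at hbd
    rw [norm_mul, Real.norm_eq_abs (j.choose l : ℝ), abs_of_nonneg
      (by positivity : (0:ℝ) ≤ (j.choose l : ℝ))]
    have hexp : M ^ (j - l) * M = M ^ (j + 1 - l) := by
      rw [← pow_succ]
      congr 1
      omega
    calc (j.choose l : ℝ) * ‖∫ τ in (0:ℝ)..t,
            fj τ * Real.log ((1 - τ ^ 2) / (1 - t ^ 2)) ^ (j - l) * (1 / (1 - τ ^ 2))‖
        ≤ (j.choose l : ℝ) * (Cf * M ^ (j - l) * M) := by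
          apply mul_le_mul_of_nonneg_left _ (by positivity)
          rw [Real.norm_eq_abs]
          exact hbd
      _ = (j.choose l : ℝ) * Cf * (M ^ (j - l) * M) := by ring
      _ = (j.choose l : ℝ) * Cf * M ^ (j + 1 - l) := by rw [hexp]
      _ ≤ (j.choose l : ℝ) * Cf * ‖M ^ (j + 1 - l)‖ := by
          rw [Real.norm_eq_abs, abs_of_nonneg (by positivity : (0:ℝ) ≤ M ^ (j + 1 - l))]
  · -- Part 3 : leading coefficient
    have hcont : ContinuousOn (fun τ : ℝ => fj τ / (1 + τ)) (Set.Icc 0 1) := by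
      apply ContinuousOn.div hfc.continuousOn (continuous_const.add continuous_id).continuousOn
      intro τ hτ
      have h0 : (0:ℝ) ≤ τ := hτ.1
      show (1:ℝ) + τ ≠ 0
      nlinarith
    have hlim := lemC 0 hcont
    have hval : (fun τ : ℝ => fj τ / (1 + τ)) 1 / ((0:ℕ) + 1 : ℝ) = fj 1 / 2 := by norm_num
    rw [hval] at hlim
    apply Tendsto.congr' _ hlim
    filter_upwards [Ioo_mem_nhdsLT_of_mem (show (1:ℝ) ∈ Set.Ioc 0 1 by norm_num)] with t ht
    obtain ⟨ht0, ht1⟩ := ht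
    have h1t : (0:ℝ) < 1 - t := by linarith
    have hMrw : Real.log (1 / (1 - t)) = -Real.log (1 - t) := by
      rw [one_div, Real.log_inv]
    have hIeq : (∫ τ in (0:ℝ)..t,
          (fj τ / (1 + τ)) * (Real.log (1 - τ) - Real.log (1 - t)) ^ 0 * (1 / (1 - τ)))
        = ∫ τ in (0:ℝ)..t,
          fj τ * Real.log ((1 - τ ^ 2) / (1 - t ^ 2)) ^ (j - j) * (1 / (1 - τ ^ 2)) := by
      apply intervalIntegral.integral_congr
      intro τ hτ
      rw [Set.uIcc_of_le (le_of_lt ht0)] at hτ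
      have hτ0 : (0:ℝ) ≤ τ := hτ.1
      have hτ1 : τ < 1 := lt_of_le_of_lt hτ.2 ht1
      have h1τ : (1:ℝ) - τ ≠ 0 := by nlinarith
      have h1pτ : (1:ℝ) + τ ≠ 0 := by nlinarith
      have hsq : (1:ℝ) - τ^2 = (1 - τ) * (1 + τ) := by ring
      simp only [Nat.sub_self, pow_zero, mul_one, one_mul]
      rw [hsq]
      field_simp
    show (∫ τ in (0:ℝ)..t,
            (fj τ / (1 + τ)) * (Real.log (1 - τ) - Real.log (1 - t)) ^ 0 * (1 / (1 - τ)))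
          / (-Real.log (1 - t)) ^ (0 + 1)
        = g j t / Real.log (1 / (1 - t))
    rw [hg j t, hIeq, hMrw]
    simp [Nat.choose_self]
  · -- Part 4 : constant coefficient
    have hlog2nn : (0:ℝ) ≤ Real.log 2 := Real.log_nonneg (by norm_num)
    have hcont : ContinuousOn (fun τ : ℝ => fj τ / (1 + τ)) (Set.Icc 0 1) := by
      apply ContinuousOn.div hfc.continuousOn (continuous_const.add continuous_id).continuousOn
      intro τ hτ
      have h0 : (0:ℝ) ≤ τ := hτ.1
      show (1:ℝ) + τ ≠ 0
      nlinarith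
    have hq : ∀ t : ℝ, t < 1 → ∀ m : ℕ, ContinuousOn
        (fun τ : ℝ => fj τ * (Real.log (1 + τ) - Real.log (1 + t)) ^ m / (1 + τ))
        (Set.Icc 0 t) := by
      intro t ht1 m
      have hne : ∀ τ ∈ Set.Icc (0:ℝ) t, (1:ℝ) + τ ≠ 0 := by
        intro τ hτ
        have h0 : (0:ℝ) ≤ τ := hτ.1
        nlinarith
      have hc1 : ContinuousOn (fun τ : ℝ => (1:ℝ) + τ) (Set.Icc 0 t) :=
        (continuous_const.add continuous_id).continuousOn
      exact ((hfc.continuousOn.mul (((ContinuousOn.log hc1 hne).sub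
        continuousOn_const).pow m))).div hc1 hne
    set J : ℕ → ℝ → ℝ := fun k t => ∫ τ in (0:ℝ)..t,
      (fj τ * (Real.log (1 + τ) - Real.log (1 + t)) ^ (j - k) / (1 + τ)) *
        (Real.log (1 - τ) - Real.log (1 - t)) ^ k * (1 / (1 - τ)) with hJ_def
    have hterm : ∀ k ∈ Finset.range (j+1), Tendsto
        (fun t : ℝ => (j.choose k : ℝ) * (J k t / (-Real.log (1 - t)) ^ (j+1)))
        (nhdsWithin 1 (Set.Iio 1))
        (nhds (if k = j then fj 1 / (2 * ((j:ℝ)+1)) else 0)) := by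
      intro k hk
      rcases eq_or_ne k j with hkj | hkj
      · subst hkj
        rw [if_pos rfl]
        have hlim := lemC k hcont
        have hval : (fun τ : ℝ => fj τ / (1 + τ)) 1 / ((k:ℕ) + 1 : ℝ) = fj 1 / (2 * ((k:ℝ)+1)) := by
          show fj 1 / (1 + 1) / ((k:ℝ) + 1) = fj 1 / (2 * ((k:ℝ)+1))
          rw [div_div]
          norm_num
        rw [hval] at hlim
        simp only [hJ_def, Nat.sub_self, pow_zero, mul_one, Nat.choose_self, Nat.cast_one, one_mul]
        exact hlim
      · have hkj' : k < j := lt_of_le_of_ne (Nat.lt_succ_iff.mp (Finset.mem_range.mp hk)) hkj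
        rw [if_neg hkj]
        set A : ℝ := (j.choose k : ℝ) * (Cf * Real.log 2 ^ (j - k)) with hA_def
        have hAnn : (0:ℝ) ≤ A := by positivity
        apply squeeze_zero_norm' (a := fun t : ℝ => A * ((-Real.log (1 - t)) ^ (j - k))⁻¹)
        · -- eventual bound
          filter_upwards [Ioo_mem_nhdsLT_of_mem (show (1:ℝ) ∈ Set.Ioc 0 1 by norm_num)]
            with t ht
          obtain ⟨ht0, ht1⟩ := ht
          have h1t : (0:ℝ) < 1 - t := by linarith
          set M : ℝ := -Real.log (1 - t) with hM_def
          have hMpos : 0 < M := by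
            have : Real.log (1 - t) < 0 := Real.log_neg h1t (by linarith)
            rw [hM_def]; linarith
          set Cq : ℝ := Cf * Real.log 2 ^ (j - k) with hCq_def
          have hCqnn : 0 ≤ Cq := by positivity
          have hbJ : |J k t| ≤ Cq * M ^ (k+1) := by
            have hptw : ∀ τ ∈ Set.Icc (0:ℝ) t,
                |fj τ * (Real.log (1 + τ) - Real.log (1 + t)) ^ (j - k) / (1 + τ)| ≤ Cq := by
              intro τ hτ
              have hτ0 : (0:ℝ) ≤ τ := hτ.1
              have hτ1 : τ ≤ 1 := le_trans hτ.2 (le_of_lt ht1)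
              have h1pτ : (1:ℝ) ≤ 1 + τ := by linarith
              have hlogτ1 : 0 ≤ Real.log (1 + τ) := Real.log_nonneg h1pτ
              have hlogτ2 : Real.log (1 + τ) ≤ Real.log 2 :=
                Real.log_le_log (by linarith) (by linarith)
              have hlogt1 : 0 ≤ Real.log (1 + t) := Real.log_nonneg (by linarith)
              have hlogt2 : Real.log (1 + t) ≤ Real.log 2 :=
                Real.log_le_log (by linarith) (by linarith)
              have hr : |Real.log (1 + τ) - Real.log (1 + t)| ≤ Real.log 2 := by
                rw [abs_le]; constructor <;> linarith
              rw [abs_div, abs_mul, abs_pow]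
              have h1 : |fj τ| * |Real.log (1 + τ) - Real.log (1 + t)| ^ (j - k)
                  ≤ Cf * Real.log 2 ^ (j - k) := by
                apply mul_le_mul (hCf τ ⟨hτ0, hτ1⟩)
                  (pow_le_pow_left₀ (abs_nonneg _) hr _) (by positivity) hCfnn
              have h2 : |(1:ℝ) + τ| ≥ 1 := by
                rw [abs_of_nonneg (by linarith)]; linarith
              calc |fj τ| * |Real.log (1 + τ) - Real.log (1 + t)| ^ (j - k) / |1 + τ|
                  ≤ |fj τ| * |Real.log (1 + τ) - Real.log (1 + t)| ^ (j - k) / 1 := by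
                    apply div_le_div_of_nonneg_left (by positivity) one_pos h2
                _ ≤ Cq := by rw [div_one, hCq_def]; exact h1
            have hb0 := lemBound k (le_of_lt ht0) ht1 (hq t ht1 (j - k)) hptw
            refine hb0.trans ?_
            have hlog10 : Real.log (1 - 0 : ℝ) = 0 := by norm_num
            rw [hlog10, zero_sub]
            have hdle : (-Real.log (1 - t)) ^ (k+1) / ((k:ℝ)+1) ≤ M ^ (k+1) := by
              rw [hM_def]
              apply div_le_self (by positivity)
              have := Nat.cast_nonneg (α:=ℝ) k; linarith
            exact mul_le_mul_of_nonneg_left hdle hCqnn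
          have hpowsplit : M ^ (j+1) = M ^ (k+1) * M ^ (j - k) := by
            rw [← pow_add]; congr 1; omega
          have hMk1 : (0:ℝ) < M ^ (k+1) := by positivity
          have hMjk : (0:ℝ) < M ^ (j - k) := by positivity
          rw [norm_mul, Real.norm_eq_abs, Real.norm_eq_abs, abs_of_nonneg
            (by positivity : (0:ℝ) ≤ (j.choose k : ℝ)), abs_div,
            abs_of_nonneg (le_of_lt (by positivity : (0:ℝ) < M ^ (j+1)))]
          calc (j.choose k : ℝ) * (|J k t| / M ^ (j+1))
              ≤ (j.choose k : ℝ) * ((Cq * M ^ (k+1)) / (M ^ (k+1) * M ^ (j - k))) := by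
                rw [← hpowsplit]
                apply mul_le_mul_of_nonneg_left _ (by positivity)
                apply div_le_div_of_nonneg_right hbJ (by positivity)
            _ = A * (M ^ (j - k))⁻¹ := by
                rw [hA_def, hCq_def]
                field_simp
        · -- the dominating function tends to 0
          have h1 : Tendsto (fun t : ℝ => (-Real.log (1 - t)) ^ (j - k))
              (nhdsWithin 1 (Set.Iio 1)) atTop :=
            (tendsto_pow_atTop (by omega : j - k ≠ 0)).comp tendsto_M
          have h2 := h1.inv_tendsto_atTop
          have h3 := h2.const_mul A
          simpa using h3
    have hsum := tendsto_finset_sum (Finset.range (j+1)) hterm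
    have hsumval : (∑ k ∈ Finset.range (j+1),
        (if k = j then fj 1 / (2 * ((j:ℝ)+1)) else 0)) = fj 1 / (2 * ((j:ℝ)+1)) := by
      rw [Finset.sum_ite_eq' (Finset.range (j+1)) j]
      rw [if_pos (Finset.self_mem_range_succ j)]
    rw [hsumval] at hsum
    apply Tendsto.congr' _ hsum
    filter_upwards [Ioo_mem_nhdsLT_of_mem (show (1:ℝ) ∈ Set.Ioc 0 1 by norm_num)] with t ht
    obtain ⟨ht0, ht1⟩ := ht
    have h1t : (0:ℝ) < 1 - t := by linarith
    have h1pt : (0:ℝ) < 1 + t := by linarith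
    have hMrw : Real.log (1 / (1 - t)) = -Real.log (1 - t) := by
      rw [one_div, Real.log_inv]
    have hIeq : (∫ τ in (0:ℝ)..t,
          fj τ * Real.log ((1 - τ ^ 2) / (1 - t ^ 2)) ^ (j - 0) * (1 / (1 - τ ^ 2)))
        = ∑ k ∈ Finset.range (j+1), (j.choose k : ℝ) * J k t := by
      have stepa : (∫ τ in (0:ℝ)..t,
            fj τ * Real.log ((1 - τ ^ 2) / (1 - t ^ 2)) ^ (j - 0) * (1 / (1 - τ ^ 2)))
          = ∫ τ in (0:ℝ)..t, ∑ k ∈ Finset.range (j+1), (j.choose k : ℝ) *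
              ((fj τ * (Real.log (1 + τ) - Real.log (1 + t)) ^ (j - k) / (1 + τ)) *
                (Real.log (1 - τ) - Real.log (1 - t)) ^ k * (1 / (1 - τ))) := by
        apply intervalIntegral.integral_congr
        intro τ hτ
        rw [Set.uIcc_of_le (le_of_lt ht0)] at hτ
        have hτ0 : (0:ℝ) ≤ τ := hτ.1
        have hτ1 : τ < 1 := lt_of_le_of_lt hτ.2 ht1
        have h1τ : (0:ℝ) < 1 - τ := by linarith
        have h1pτ : (0:ℝ) < 1 + τ := by linarith
        have hLdec : Real.log ((1 - τ ^ 2) / (1 - t ^ 2))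
            = (Real.log (1 - τ) - Real.log (1 - t)) +
              (Real.log (1 + τ) - Real.log (1 + t)) := by
          rw [show (1:ℝ) - τ^2 = (1 - τ) * (1 + τ) from by ring,
            show (1:ℝ) - t^2 = (1 - t) * (1 + t) from by ring,
            Real.log_div (by positivity) (by positivity),
            Real.log_mul (ne_of_gt h1τ) (ne_of_gt h1pτ),
            Real.log_mul (ne_of_gt h1t) (ne_of_gt h1pt)]
          ring
        dsimp only
        rw [Nat.sub_zero, hLdec, add_pow, Finset.mul_sum, Finset.sum_mul]
        apply Finset.sum_congr rfl
        intro k _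
        rw [show (1:ℝ) - τ^2 = (1 - τ) * (1 + τ) from by ring,
          show (1:ℝ) / ((1 - τ) * (1 + τ)) = (1/(1 - τ)) * (1/(1 + τ)) from
            (one_div_mul_one_div _ _).symm,
          div_eq_mul_one_div (fj τ * (Real.log (1 + τ) - Real.log (1 + t)) ^ (j - k)) (1 + τ)]
        ring
      rw [stepa, intervalIntegral.integral_finset_sum]
      · apply Finset.sum_congr rfl
        intro k _
        rw [intervalIntegral.integral_const_mul]
      · intro k _
        exact (intInt k (le_of_lt ht0) ht1 (hq t ht1 (j - k))).const_mul _
    show (∑ k ∈ Finset.range (j+1), (j.choose k : ℝ) * (J k t / (-Real.log (1 - t)) ^ (j+1)))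
        = g 0 t / Real.log (1 / (1 - t)) ^ (j + 1)
    rw [hg 0 t, hMrw, hIeq, Nat.choose_zero_right, Nat.cast_one, one_mul, Finset.sum_div]
    apply Finset.sum_congr rfl
    intro k _
    ring
end

section
/- Let ε > 0 and ρ > 0, and let f : [−1,1] × ℝ → ℝ be continuous with |f(t,x)| ≤ ρ·e^{ε|x|} for all (t,x) ∈ [−1,1] × ℝ. For t ∈ (−1,1) and x ∈ ℝ define u(t,x) = ∫_0^t f(τ, x + ln((1−τ²)/(1−t²)))·(1/(1−τ²)) dτ. Then there is a constant C > 0 depending only on ε (one may take C = 2^ε/ε) such that for all t ∈ (−1,1) and x ∈ ℝ: |u(t,x)| ≤ C·ρ·e^{ε|x|}·(1−t²)^{−ε}. -/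
open Set

private lemma pow_bound18 {ε : ℝ} (hε : 0 < ε) {b : ℝ} (hb1 : 1 ≤ b) (hb2 : b ≤ 2) :
    b ^ (ε - 1) ≤ 2 ^ ε := by
  have h2 : (1 : ℝ) ≤ 2 ^ ε := by
    calc (1:ℝ) = 2 ^ (0:ℝ) := (Real.rpow_zero 2).symm
    _ ≤ 2 ^ ε := Real.rpow_le_rpow_of_exponent_le one_le_two hε.le
  rcases le_or_gt 1 ε with h | h
  · calc b ^ (ε-1) ≤ 2 ^ (ε-1) := Real.rpow_le_rpow (by linarith) hb2 (by linarith)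
    _ ≤ 2 ^ ε := Real.rpow_le_rpow_of_exponent_le one_le_two (by linarith)
  · calc b ^ (ε-1) ≤ 1 := Real.rpow_le_one_of_one_le_of_nonpos hb1 (by linarith)
    _ ≤ 2 ^ ε := h2

/-- Exponential-growth estimate for `u = L₀^{-1} f` on the strip `(-1,1) × ℝ`: if
`|f(t,x)| ≤ ρ e^{ε|x|}` on `[-1,1] × ℝ` and
`u(t,x) = ∫_0^t f(τ, x + ln((1-τ²)/(1-t²)))/(1-τ²) dτ`, then there is `C > 0`
(depending only on `ε`) with `|u(t,x)| ≤ C ρ e^{ε|x|} (1-t²)^{-ε}` for `t ∈ (-1,1)`. -/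
theorem stmt_18 (ε ρ : ℝ) (hε : 0 < ε) (hρ : 0 < ρ) (f : ℝ × ℝ → ℝ)
    (hfcont : ContinuousOn f (Icc (-1) 1 ×ˢ univ))
    (hfb : ∀ s ∈ Icc (-1 : ℝ) 1, ∀ x : ℝ, |f (s, x)| ≤ ρ * Real.exp (ε * |x|))
    (u : ℝ → ℝ → ℝ)
    (hu : ∀ t x : ℝ, u t x = ∫ τ in (0 : ℝ)..t,
      f (τ, x + Real.log ((1 - τ ^ 2) / (1 - t ^ 2))) * (1 / (1 - τ ^ 2))) :
    ∃ C > (0 : ℝ), ∀ t ∈ Ioo (-1 : ℝ) 1, ∀ x : ℝ,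
      |u t x| ≤ C * ρ * Real.exp (ε * |x|) * (1 - t ^ 2) ^ (-ε) := by
  refine ⟨2 ^ ε / ε, by positivity, ?_⟩
  rintro t ⟨ht1, ht2⟩ x
  have ht0 : 0 < 1 - t ^ 2 := by nlinarith
  set K : ℝ := ρ * Real.exp (ε * |x|) * (1 - t ^ 2) ^ (-ε) with hK
  have hKpos : 0 < K := by positivity
  rw [hu]
  -- pointwise bound on the integrand
  have key : ∀ τ ∈ uIoc (0:ℝ) t,
      |f (τ, x + Real.log ((1 - τ ^ 2) / (1 - t ^ 2))) * (1 / (1 - τ ^ 2))|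
        ≤ K * ((1 - τ) ^ (ε - 1) * (1 + τ) ^ (ε - 1)) := by
    intro τ hτ
    have hτ1 : -1 < τ := lt_of_le_of_lt (le_min (by norm_num) ht1.le) hτ.1
    have hτ2 : τ < 1 := lt_of_le_of_lt hτ.2 (max_lt one_pos ht2)
    have h1 : 0 < 1 - τ ^ 2 := by nlinarith
    have h2 : 1 - t ^ 2 ≤ 1 - τ ^ 2 := by
      rcases le_total 0 t with h | h
      · rw [uIoc_of_le h] at hτ; nlinarith [hτ.1, hτ.2]
      · rw [uIoc_comm, uIoc_of_le h] at hτ; nlinarith [hτ.1, hτ.2]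
    have hτmem : τ ∈ Icc (-1:ℝ) 1 := ⟨hτ1.le, hτ2.le⟩
    have hratio : 1 ≤ (1 - τ ^ 2) / (1 - t ^ 2) := (one_le_div ht0).2 h2
    set L := Real.log ((1 - τ ^ 2) / (1 - t ^ 2)) with hL
    have hL0 : 0 ≤ L := Real.log_nonneg hratio
    have hfbd := hfb τ hτmem (x + L)
    have habs : |x + L| ≤ |x| + L := (abs_add_le _ _).trans (by rw [abs_of_nonneg hL0])
    have hexp : Real.exp (ε * |x + L|) ≤ Real.exp (ε * |x|) * Real.exp (ε * L) := by
      rw [← Real.exp_add]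
      exact Real.exp_le_exp.2 (by nlinarith)
    have hexpL : Real.exp (ε * L) = (1 - τ ^ 2) ^ ε * (1 - t ^ 2) ^ (-ε) := by
      rw [hL, mul_comm ε, ← Real.rpow_def_of_pos (by positivity)]
      rw [Real.div_rpow h1.le ht0.le, Real.rpow_neg ht0.le, div_eq_mul_inv]
    have hsplit : (1 - τ ^ 2) ^ ε * (1 / (1 - τ ^ 2))
        = (1 - τ) ^ (ε - 1) * (1 + τ) ^ (ε - 1) := by
      have e1 : (1 - τ ^ 2) ^ ε * (1 / (1 - τ ^ 2)) = (1 - τ ^ 2) ^ (ε - 1) := by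
        rw [Real.rpow_sub h1, Real.rpow_one, div_eq_mul_inv, one_mul, div_eq_mul_inv]
      rw [e1, show (1 - τ ^ 2) = (1 - τ) * (1 + τ) by ring,
        Real.mul_rpow (by linarith) (by linarith)]
    have hpos : 0 < 1 / (1 - τ ^ 2) := by positivity
    calc |f (τ, x + L) * (1 / (1 - τ ^ 2))|
        = |f (τ, x + L)| * (1 / (1 - τ ^ 2)) := by
          rw [abs_mul, abs_of_pos hpos]
      _ ≤ (ρ * (Real.exp (ε * |x|) * Real.exp (ε * L))) * (1 / (1 - τ ^ 2)) := by
          have := hfbd.trans (by nlinarith [Real.exp_pos (ε * |x+L|)] :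
            ρ * Real.exp (ε * |x + L|) ≤ ρ * (Real.exp (ε * |x|) * Real.exp (ε * L)))
          exact mul_le_mul_of_nonneg_right this hpos.le
      _ = K * ((1 - τ) ^ (ε - 1) * (1 + τ) ^ (ε - 1)) := by
          rw [hexpL, hK, ← hsplit]; ring
  -- integrability of the integrand
  have hsub : uIcc (0:ℝ) t ⊆ Ioo (-1:ℝ) 1 := by
    intro s hs
    constructor
    · exact lt_of_lt_of_le (lt_min (by norm_num) ht1) hs.1
    · exact lt_of_le_of_lt hs.2 (max_lt one_pos ht2)
  rcases le_total 0 t with htpos | htneg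
  · -- t ≥ 0 : dominate by K * 2^ε * (1-τ)^(ε-1)
    have hbd : ∀ᵐ τ ∂(MeasureTheory.volume.restrict (uIoc (0:ℝ) t)),
        ‖f (τ, x + Real.log ((1 - τ ^ 2) / (1 - t ^ 2))) * (1 / (1 - τ ^ 2))‖
          ≤ K * 2 ^ ε * (1 - τ) ^ (ε - 1) := by
      refine MeasureTheory.ae_restrict_of_forall_mem measurableSet_uIoc ?_
      intro τ hτ
      rw [Real.norm_eq_abs]
      refine (key τ hτ).trans ?_
      rw [uIoc_of_le htpos] at hτ
      have h1τ : (1:ℝ) ≤ 1 + τ := by linarith [hτ.1]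
      have h2τ : 1 + τ ≤ 2 := by
        have := lt_of_le_of_lt hτ.2 ht2; linarith
      have hb := pow_bound18 hε h1τ h2τ
      have hnn : (0:ℝ) ≤ (1 - τ) ^ (ε - 1) := Real.rpow_nonneg (by
        have := lt_of_le_of_lt hτ.2 ht2; linarith) _
      calc K * ((1 - τ) ^ (ε - 1) * (1 + τ) ^ (ε - 1))
          ≤ K * ((1 - τ) ^ (ε - 1) * 2 ^ ε) :=
            mul_le_mul_of_nonneg_left (mul_le_mul_of_nonneg_left hb hnn) hKpos.le
        _ = K * 2 ^ ε * (1 - τ) ^ (ε - 1) := by ring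
    have hgint : IntervalIntegrable (fun τ => K * 2 ^ ε * (1 - τ) ^ (ε - 1))
        MeasureTheory.volume 0 t := by
      apply ContinuousOn.intervalIntegrable
      apply ContinuousOn.mul continuousOn_const
      apply ContinuousOn.rpow_const (continuousOn_const.sub continuousOn_id)
      intro s hs
      exact Or.inl (by have := (hsub hs).2; intro h; simp only [Pi.sub_apply, id_eq] at h; nlinarith)
    have hle := intervalIntegral.norm_integral_le_abs_of_norm_le hbd hgint
    rw [Real.norm_eq_abs] at hle
    refine hle.trans ?_
    have hcomp : (∫ τ in (0:ℝ)..t, K * 2 ^ ε * (1 - τ) ^ (ε - 1))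
        = K * 2 ^ ε * ((1 - (1 - t) ^ ε) / ε) := by
      rw [intervalIntegral.integral_const_mul]
      congr 1
      have : (∫ τ in (0:ℝ)..t, (1 - τ) ^ (ε - 1))
          = ∫ s in (1 - t)..(1 - 0:ℝ), s ^ (ε - 1) :=
        intervalIntegral.integral_comp_sub_left (fun s => s ^ (ε - 1)) 1
      rw [this, integral_rpow (Or.inl (by linarith)), show ε - 1 + 1 = ε by ring]
      norm_num [Real.one_rpow]
    rw [hcomp]
    have h1t : (0:ℝ) ≤ (1 - t) ^ ε := Real.rpow_nonneg (by linarith) _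
    have h1t' : (1 - t) ^ ε ≤ 1 := Real.rpow_le_one (by linarith) (by linarith) hε.le
    have hval : 0 ≤ K * 2 ^ ε * ((1 - (1 - t) ^ ε) / ε) := by
      apply mul_nonneg (by positivity)
      apply div_nonneg (by linarith) hε.le
    rw [abs_of_nonneg hval]
    have h2e : (0:ℝ) < 2 ^ ε := by positivity
    calc K * 2 ^ ε * ((1 - (1 - t) ^ ε) / ε) ≤ K * 2 ^ ε * (1 / ε) := by
          gcongr
          linarith
      _ = 2 ^ ε / ε * ρ * Real.exp (ε * |x|) * (1 - t ^ 2) ^ (-ε) := by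
          rw [hK]; ring
  · -- t ≤ 0 : dominate by K * 2^ε * (1+τ)^(ε-1)
    have hbd : ∀ᵐ τ ∂(MeasureTheory.volume.restrict (uIoc (0:ℝ) t)),
        ‖f (τ, x + Real.log ((1 - τ ^ 2) / (1 - t ^ 2))) * (1 / (1 - τ ^ 2))‖
          ≤ K * 2 ^ ε * (1 + τ) ^ (ε - 1) := by
      refine MeasureTheory.ae_restrict_of_forall_mem measurableSet_uIoc ?_
      intro τ hτ
      rw [Real.norm_eq_abs]
      refine (key τ hτ).trans ?_
      rw [uIoc_comm, uIoc_of_le htneg] at hτ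
      have h1τ : (1:ℝ) ≤ 1 - τ := by linarith [hτ.2]
      have h2τ : 1 - τ ≤ 2 := by
        have := lt_of_lt_of_le ht1 hτ.1.le; linarith
      have hb := pow_bound18 hε h1τ h2τ
      have hnn : (0:ℝ) ≤ (1 + τ) ^ (ε - 1) := Real.rpow_nonneg (by
        have := lt_of_lt_of_le ht1 hτ.1.le; linarith) _
      calc K * ((1 - τ) ^ (ε - 1) * (1 + τ) ^ (ε - 1))
          ≤ K * (2 ^ ε * (1 + τ) ^ (ε - 1)) :=
            mul_le_mul_of_nonneg_left (mul_le_mul_of_nonneg_right hb hnn) hKpos.le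
        _ = K * 2 ^ ε * (1 + τ) ^ (ε - 1) := by ring
    have hgint : IntervalIntegrable (fun τ => K * 2 ^ ε * (1 + τ) ^ (ε - 1))
        MeasureTheory.volume 0 t := by
      apply ContinuousOn.intervalIntegrable
      apply ContinuousOn.mul continuousOn_const
      apply ContinuousOn.rpow_const (continuousOn_const.add continuousOn_id)
      intro s hs
      exact Or.inl (by have := (hsub hs).1; intro h; simp only [Pi.add_apply, id_eq] at h; nlinarith)
    have hle := intervalIntegral.norm_integral_le_abs_of_norm_le hbd hgint
    rw [Real.norm_eq_abs] at hle
    refine hle.trans ?_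
    have hcomp : (∫ τ in (0:ℝ)..t, K * 2 ^ ε * (1 + τ) ^ (ε - 1))
        = K * 2 ^ ε * (((1 + t) ^ ε - 1) / ε) := by
      rw [intervalIntegral.integral_const_mul]
      congr 1
      have : (∫ τ in (0:ℝ)..t, (1 + τ) ^ (ε - 1))
          = ∫ s in (0 + 1:ℝ)..(t + 1), s ^ (ε - 1) := by
        rw [← intervalIntegral.integral_comp_add_right (fun s => s ^ (ε - 1)) 1]
        simp only [add_comm]
      rw [this, integral_rpow (Or.inl (by linarith)), show ε - 1 + 1 = ε by ring]
      norm_num [Real.one_rpow]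
      rw [add_comm t 1]
    rw [hcomp]
    have h1t : (0:ℝ) ≤ (1 + t) ^ ε := Real.rpow_nonneg (by linarith) _
    have h1t' : (1 + t) ^ ε ≤ 1 := Real.rpow_le_one (by linarith) (by linarith) hε.le
    have habs2 : |K * 2 ^ ε * (((1 + t) ^ ε - 1) / ε)|
        = K * 2 ^ ε * ((1 - (1 + t) ^ ε) / ε) := by
      rw [abs_mul, abs_of_nonneg (by positivity : (0:ℝ) ≤ K * 2 ^ ε)]
      congr 1
      rw [abs_div, abs_of_pos hε, abs_of_nonpos (by linarith)]
      ring
    rw [habs2]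
    calc K * 2 ^ ε * ((1 - (1 + t) ^ ε) / ε) ≤ K * 2 ^ ε * (1 / ε) := by
          gcongr
          linarith
      _ = 2 ^ ε / ε * ρ * Real.exp (ε * |x|) * (1 - t ^ 2) ^ (-ε) := by
          rw [hK]; ring
end
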